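/- Let (G,·,∘) be a bi-skew brace with gamma function γ. Then every subgroup of the group (G,∘) is a left ideal of (G,·,∘) if and only if for every σ ∈ G the automorphism γ(σ) is a power automorphism of (G,∘), i.e., for every τ ∈ G there is an integer n with γ(σ)(τ) = τ^n, the power computed in (G,∘). -/

import Mathlib

def IsSkewBrace {G : Type*} (dot circ : Group G) : Prop :=
  ∀ σ τ κ : G,
    circ.mul σ (dot.mul τ κ) =
      dot.mul (dot.mul (circ.mul σ τ) (dot.inv σ)) (circ.mul σ κ)

def gammaFun {G : Type*} (dot circ : Group G) (σ τ : G) : G :=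
  dot.mul (dot.inv σ) (circ.mul σ τ)

def IsSubgroupOf {G : Type*} (S : Group G) (H : Set G) : Prop :=
  S.one ∈ H ∧ (∀ a ∈ H, ∀ b ∈ H, S.mul a b ∈ H) ∧ (∀ a ∈ H, S.inv a ∈ H)

def IsLeftIdeal {G : Type*} (dot circ : Group G) (H : Set G) : Prop :=
  IsSubgroupOf dot H ∧ ∀ σ : G, ∀ τ ∈ H, gammaFun dot circ σ τ ∈ H

def IsStrongLeftIdeal {G : Type*} (dot circ : Group G) (H : Set G) : Prop :=
  IsLeftIdeal dot circ H ∧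
    ∀ σ : G, ∀ τ ∈ H, dot.mul (dot.mul σ τ) (dot.inv σ) ∈ H

def IsCharacteristicSubgroupOf {G : Type*} (S : Group G) (H : Set G) : Prop :=
  IsSubgroupOf S H ∧
    ∀ f : G ≃ G, (∀ a b : G, f (S.mul a b) = S.mul (f a) (f b)) → ∀ a ∈ H, f a ∈ H

def oppGroup {G : Type*} (dot : Group G) : Group G :=
  letI := dot
  { mul := fun a b => b * a
    one := (1 : G)
    inv := fun a => a⁻¹
    div := fun a b => b⁻¹ * a
    npow := fun n x => @npowRec G ⟨(1 : G)⟩ ⟨fun a b => b * a⟩ n x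
    npow_zero := fun _ => rfl
    npow_succ := fun _ _ => rfl
    zpow := fun n x =>
      @zpowRec G ⟨(1 : G)⟩ ⟨fun a b => b * a⟩ ⟨fun a => a⁻¹⟩
        (@npowRec G ⟨(1 : G)⟩ ⟨fun a b => b * a⟩) n x
    zpow_zero' := fun _ => rfl
    zpow_succ' := fun _ _ => rfl
    zpow_neg' := fun _ _ => rfl
    div_eq_mul_inv := fun _ _ => rfl
    mul_assoc := fun a b c => (mul_assoc c b a).symm
    one_mul := fun a => mul_one a
    mul_one := fun a => one_mul a
    inv_mul_cancel := fun a => mul_inv_cancel a }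

def lam {G : Type*} (S : Group G) (σ : G) : Equiv.Perm G :=
  letI := S; Equiv.mulLeft σ

def rho {G : Type*} (S : Group G) (σ : G) : Equiv.Perm G :=
  letI := S; Equiv.mulRight σ⁻¹

/-!
In any skew brace `γ` is a homomorphism from `(G,∘)` to the automorphisms of `(G,·)`, and this
gives `a · b = a ∘ γ(ā)(b)` and `a⁻¹ = γ(a)(ā)`, with `ā` the inverse of `a` in `(G,∘)`. Hence a
`γ`-invariant subgroup of `(G,∘)` is also a subgroup of `(G,·)`, i.e. a left ideal; and when every
`γ(σ)` is a power map, every subgroup of `(G,∘)` is `γ`-invariant. Conversely, if the cyclic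
subgroup of `(G,∘)` generated by `τ` is a left ideal, it contains `γ(σ)(τ)`.
-/

section

variable {G : Type*}

theorem isSubgroupOf_coe_subgroup (S : Group G) (K : @Subgroup G S) :
    IsSubgroupOf S (K : Set G) :=
  ⟨K.one_mem, fun _ ha _ hb => K.mul_mem ha hb, fun _ ha => K.inv_mem ha⟩

theorem IsSubgroupOf.zpow_mem {S : Group G} {H : Set G} (hH : IsSubgroupOf S H) {τ : G}
    (hτ : τ ∈ H) (n : ℤ) : S.zpow n τ ∈ H :=
  letI := S
  ({ carrier := H, one_mem' := hH.1, mul_mem' := fun {a b} ha hb => hH.2.1 a ha b hb,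
      inv_mem' := fun {a} ha => hH.2.2 a ha } : Subgroup G).zpow_mem hτ n

theorem isSubgroupOf_range_zpow (S : Group G) (τ : G) :
    IsSubgroupOf S (Set.range fun n : ℤ => S.zpow n τ) :=
  letI := S
  Subgroup.coe_zpowers τ ▸ isSubgroupOf_coe_subgroup S (Subgroup.zpowers τ)

theorem circ_mul_eq_mul_gammaFun (dot circ : Group G) (σ τ : G) :
    circ.mul σ τ = dot.mul σ (gammaFun dot circ σ τ) :=
  letI := dot
  (mul_inv_cancel_left σ (circ.mul σ τ)).symm

namespace IsSkewBrace

variable {dot circ : Group G} (h : IsSkewBrace dot circ)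
include h

theorem gammaFun_mul (σ τ κ : G) :
    gammaFun dot circ σ (dot.mul τ κ) =
      dot.mul (gammaFun dot circ σ τ) (gammaFun dot circ σ κ) := by
  let := dot
  have hbrace : circ.mul σ (τ * κ) = circ.mul σ τ * σ⁻¹ * circ.mul σ κ := h σ τ κ
  show σ⁻¹ * circ.mul σ (τ * κ) = σ⁻¹ * circ.mul σ τ * (σ⁻¹ * circ.mul σ κ)
  rw [hbrace]
  group

theorem gammaFun_one_right (σ : G) : gammaFun dot circ σ dot.one = dot.one := by
  let := dot
  have hmul : gammaFun dot circ σ (1 * 1) = gammaFun dot circ σ 1 * gammaFun dot circ σ 1 :=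
    h.gammaFun_mul σ 1 1
  rw [mul_one] at hmul
  exact left_eq_mul.mp hmul

theorem circ_mul_one (σ : G) : circ.mul σ dot.one = σ := by
  let := dot
  exact (inv_mul_eq_one.mp (h.gammaFun_one_right σ)).symm

theorem one_eq : dot.one = circ.one := by
  calc dot.one = circ.mul circ.one dot.one := (circ.one_mul _).symm
    _ = circ.one := h.circ_mul_one _

theorem gammaFun_inv (σ τ : G) :
    gammaFun dot circ σ (dot.inv τ) = dot.inv (gammaFun dot circ σ τ) := by
  let := dot
  refine eq_inv_of_mul_eq_one_left ?_
  calc gammaFun dot circ σ τ⁻¹ * gammaFun dot circ σ τ = gammaFun dot circ σ (τ⁻¹ * τ) :=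
        (h.gammaFun_mul σ τ⁻¹ τ).symm
    _ = 1 := by rw [inv_mul_cancel]; exact h.gammaFun_one_right σ

theorem gammaFun_gammaFun (σ τ κ : G) :
    gammaFun dot circ σ (gammaFun dot circ τ κ) = gammaFun dot circ (circ.mul σ τ) κ := by
  have hassoc : circ.mul (circ.mul σ τ) κ = circ.mul σ (circ.mul τ κ) := circ.mul_assoc σ τ κ
  let := dot
  have hστ : circ.mul σ τ = σ * gammaFun dot circ σ τ := circ_mul_eq_mul_gammaFun dot circ σ τ
  calc gammaFun dot circ σ (τ⁻¹ * circ.mul τ κ)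
      = gammaFun dot circ σ τ⁻¹ * gammaFun dot circ σ (circ.mul τ κ) := h.gammaFun_mul _ _ _
    _ = (gammaFun dot circ σ τ)⁻¹ * (σ⁻¹ * circ.mul σ (circ.mul τ κ)) := by
        rw [h.gammaFun_inv]; rfl
    _ = (circ.mul σ τ)⁻¹ * circ.mul (circ.mul σ τ) κ := by rw [hassoc, hστ]; group

theorem gammaFun_one_left (κ : G) : gammaFun dot circ circ.one κ = κ := by
  have hone : circ.mul circ.one κ = κ := circ.one_mul κ
  let := dot
  show (circ.one)⁻¹ * circ.mul circ.one κ = κ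
  rw [hone, ← h.one_eq]
  show (1 : G)⁻¹ * κ = κ
  rw [inv_one, one_mul]

theorem mul_eq_circ_mul_gammaFun (a b : G) :
    dot.mul a b = circ.mul a (gammaFun dot circ (circ.inv a) b) := by
  have hinv : circ.mul a (circ.inv a) = circ.one := @mul_inv_cancel G circ a
  rw [circ_mul_eq_mul_gammaFun dot circ, h.gammaFun_gammaFun, hinv, h.gammaFun_one_left]

theorem inv_eq_gammaFun (σ : G) : dot.inv σ = gammaFun dot circ σ (circ.inv σ) := by
  have hinv : circ.mul σ (circ.inv σ) = circ.one := @mul_inv_cancel G circ σ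
  let := dot
  refine inv_eq_of_mul_eq_one_right ?_
  show _ = dot.one
  rw [h.one_eq, ← hinv]
  exact (circ_mul_eq_mul_gammaFun dot circ σ _).symm

theorem isLeftIdeal_of_gammaFun_mem {H : Set G} (hH : IsSubgroupOf circ H)
    (hγ : ∀ σ, ∀ τ ∈ H, gammaFun dot circ σ τ ∈ H) : IsLeftIdeal dot circ H := by
  refine ⟨⟨h.one_eq ▸ hH.1, fun a ha b hb => ?_, fun a ha => ?_⟩, hγ⟩
  · rw [h.mul_eq_circ_mul_gammaFun]
    exact hH.2.1 a ha _ (hγ _ b hb)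
  · rw [h.inv_eq_gammaFun]
    exact hγ a _ (hH.2.2 a ha)

end IsSkewBrace

end

theorem stmt10_general {G : Type*} (dot circ : Group G)
    (h1 : IsSkewBrace dot circ) :
    (∀ H : Set G, IsSubgroupOf circ H → IsLeftIdeal dot circ H) ↔
      ∀ σ τ : G, ∃ n : ℤ, gammaFun dot circ σ τ = circ.zpow n τ := by
  constructor
  · intro hLI σ τ
    have hτ : τ ∈ Set.range fun n : ℤ => circ.zpow n τ := ⟨1, @zpow_one G circ.toDivInvMonoid τ⟩
    obtain ⟨n, hn⟩ := (hLI _ (isSubgroupOf_range_zpow circ τ)).2 σ τ hτ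
    exact ⟨n, hn.symm⟩
  · intro hpow H hH
    refine h1.isLeftIdeal_of_gammaFun_mem hH fun σ τ hτ => ?_
    obtain ⟨n, hn⟩ := hpow σ τ
    exact hn ▸ hH.zpow_mem hτ n

/-- For a bi-skew brace `(G,·,∘)`, every subgroup of `(G,∘)` is a left
ideal of `(G,·,∘)` iff every `γ(σ)` is a power automorphism of `(G,∘)`. -/
theorem stmt10 {G : Type*} (dot circ : Group G)
    (h1 : IsSkewBrace dot circ) (h2 : IsSkewBrace circ dot) :
    (∀ H : Set G, IsSubgroupOf circ H → IsLeftIdeal dot circ H) ↔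
      ∀ σ τ : G, ∃ n : ℤ, gammaFun dot circ σ τ = circ.zpow n τ :=
  stmt10_general dot circ h1
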